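/- arXiv:0708.0175 — 4 statements merged into one kernel-verified Lean document; each statement's English description precedes it below -/
import Mathlib

section
/- Let p ≥ 1 be an integer and Q > 0. For any pair θ, θ' ∈ E_p(Q), the Hellinger distance is dominated by the L²-distance between the densities: d_H(P_{θ'}, P_θ) ≤ (e^B/2) ‖f_{θ'} − f_θ‖_{L²[0,1]}. In particular, if d_H(P_{θ'}, P_θ) > ε for some ε > 0, then ‖f_{θ'} − f_θ‖_∞ ≥ ‖f_{θ'} − f_θ‖_{L²[0,1]} > 2 e^{−B} ε. -/
open MeasureTheory Filter ProbabilityTheory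

noncomputable section

/-- `v₀ = 0`; for `j ≥ 1`, `v_j = j+1` if `j` odd, `v_j = j` if `j` even. -/
def vcoef (j : ℕ) : ℕ := if j = 0 then 0 else if j % 2 = 1 then j + 1 else j

/-- The trigonometric basis of `L²[0,1]`. -/
def phiB (j : ℕ) (x : ℝ) : ℝ :=
  if j = 0 then 1
  else if j % 2 = 1 then Real.sqrt 2 * Real.sin (2 * Real.pi * (((j + 1) / 2 : ℕ) : ℝ) * x)
  else Real.sqrt 2 * Real.cos (2 * Real.pi * (((j / 2 : ℕ) : ℝ)) * x)

/-- The Sobolev ellipsoid `E_p(Q)`. -/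
def ellipsoid (p : ℕ) (Q : ℝ) : Set (ℕ → ℝ) :=
  {θ | Summable (fun j => (vcoef j : ℝ) ^ (2 * p) * θ j ^ 2) ∧
    ∑' j, (vcoef j : ℝ) ^ (2 * p) * θ j ^ 2 < Q}

/-- The Sobolev space `E_p = E_p(∞)`. -/
def sobolev (p : ℕ) : Set (ℕ → ℝ) :=
  {θ | Summable fun j => (vcoef j : ℝ) ^ (2 * p) * θ j ^ 2}

/-- `A = Σ_{j≥1} v_j^{-2p}`. -/
def Aconst (p : ℕ) : ℝ := ∑' j : ℕ, ((vcoef (j + 1) : ℝ) ^ (2 * p))⁻¹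

/-- `B = √(2QA)`. -/
def Bconst (p : ℕ) (Q : ℝ) : ℝ := Real.sqrt (2 * Q * Aconst p)

/-- `B₁² = e^{-8B}`. -/
def B1sq (p : ℕ) (Q : ℝ) : ℝ := Real.exp (-8 * Bconst p Q)

/-- `Σ_{j≥1} θ_j φ_j(x)`. -/
def logDen (θ : ℕ → ℝ) (x : ℝ) : ℝ := ∑' j : ℕ, θ (j + 1) * phiB (j + 1) x

/-- `f_θ(x) = exp(Σ_{j≥1} θ_j φ_j(x)) / ∫₀¹ exp(Σ_{j≥1} θ_j φ_j(t)) dt`. -/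
def fdens (θ : ℕ → ℝ) (x : ℝ) : ℝ :=
  Real.exp (logDen θ x) / ∫ t in Set.Icc (0 : ℝ) 1, Real.exp (logDen θ t)

/-- `P_θ`, the probability measure on `[0,1]` with density `f_θ`. -/
def Pmeas (θ : ℕ → ℝ) : Measure ℝ :=
  (volume.restrict (Set.Icc (0 : ℝ) 1)).withDensity fun x => ENNReal.ofReal (fdens θ x)

/-- Hellinger distance between two densities on `[0,1]`. -/
def hell (f g : ℝ → ℝ) : ℝ :=
  Real.sqrt (∫ x in Set.Icc (0 : ℝ) 1, (Real.sqrt (f x) - Real.sqrt (g x)) ^ 2)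

/-- Hellinger distance `d_H(P_θ, P_{θ'})`. -/
def dH (θ θ' : ℕ → ℝ) : ℝ := hell (fdens θ) (fdens θ')

/-- Posterior probability of a set `S` of parameters given data `xs` and prior `π`. -/
def posterior (π : Measure (ℕ → ℝ)) {n : ℕ} (xs : Fin n → ℝ) (S : Set (ℕ → ℝ)) : ℝ :=
  (∫ θ in S, ∏ i, fdens θ (xs i) ∂π) / ∫ θ, ∏ i, fdens θ (xs i) ∂π

/-- `ε_n = n^{-p/(2p+1)}`. -/
def eps (p : ℕ) (n : ℕ) : ℝ := (n : ℝ) ^ (-(p : ℝ) / (2 * p + 1))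

/-- Restriction of a measure to a set, normalized to a probability measure. -/
def normRestrict (μ : Measure (ℕ → ℝ)) (S : Set (ℕ → ℝ)) : Measure (ℕ → ℝ) :=
  (μ S)⁻¹ • μ.restrict S

/-- The Bayes estimator: posterior expected density. -/
def bayesEst (π : Measure (ℕ → ℝ)) {n : ℕ} (xs : Fin n → ℝ) (x : ℝ) : ℝ :=
  (∫ θ, fdens θ x * ∏ i, fdens θ (xs i) ∂π) / ∫ θ, ∏ i, fdens θ (xs i) ∂π

/-- `E_{θ₀}^n[ d_H²(f_{θ₀}, f̂_n) ]`, the risk of the Bayes estimator. -/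
def bayesRisk (π : Measure (ℕ → ℝ)) (θ₀ : ℕ → ℝ) (n : ℕ) : ℝ :=
  ∫ xs, (hell (fdens θ₀) (bayesEst π xs)) ^ 2 ∂(Measure.pi fun _ : Fin n => Pmeas θ₀)

end


/-!
Cauchy–Schwarz against the weights `v_j^{-p}` gives `Σ_{j≥1} |θ_j| ≤ √(QA)`, and `|φ_j| ≤ √2`,
so the log-density is bounded by `B`. Hence the normalising constant lies in `[e^{-B}, e^B]` and
`e^{-2B} ≤ f_θ ≤ e^{2B}`. Writing `√a - √b = (a - b) / (√a + √b)` with `√a, √b ≥ e^{-B}` bounds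
the Hellinger integrand pointwise by `(e^B/2)² (f_{θ'} - f_θ)²`. The second claim follows since
`[0,1]` has unit length.
-/

open MeasureTheory Real Set

lemma abs_phiB_le (j : ℕ) (x : ℝ) : |phiB j x| ≤ √2 := by
  have hsqrt : |√2| = √2 := abs_of_nonneg (sqrt_nonneg 2)
  unfold phiB
  split_ifs
  · simp
  · rw [abs_mul, hsqrt]
    exact mul_le_of_le_one_right (sqrt_nonneg 2) (abs_sin_le_one _)
  · rw [abs_mul, hsqrt]
    exact mul_le_of_le_one_right (sqrt_nonneg 2) (abs_cos_le_one _)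

lemma continuous_phiB (j : ℕ) : Continuous (phiB j) := by
  unfold phiB
  split_ifs <;> fun_prop

lemma succ_le_vcoef_succ (j : ℕ) : j + 1 ≤ vcoef (j + 1) := by
  rw [vcoef, if_neg j.succ_ne_zero]
  split_ifs <;> omega

lemma summable_inv_vcoef_succ_pow {p : ℕ} (hp : 1 ≤ p) :
    Summable fun j : ℕ => ((vcoef (j + 1) : ℝ) ^ (2 * p))⁻¹ := by
  have hbase : Summable fun j : ℕ => (((j + 1 : ℕ) : ℝ) ^ 2)⁻¹ :=
    (summable_nat_add_iff 1).2 (Real.summable_nat_pow_inv.2 one_lt_two)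
  refine hbase.of_nonneg_of_le (fun j => by positivity) fun j => inv_anti₀ (by positivity) ?_
  have hj : (1 : ℝ) ≤ ((j + 1 : ℕ) : ℝ) := by exact_mod_cast Nat.succ_pos j
  calc (((j + 1 : ℕ) : ℝ)) ^ 2 ≤ ((j + 1 : ℕ) : ℝ) ^ (2 * p) :=
        pow_le_pow_right₀ hj (by omega)
    _ ≤ (vcoef (j + 1) : ℝ) ^ (2 * p) := by gcongr; exact_mod_cast succ_le_vcoef_succ j

lemma Aconst_nonneg (p : ℕ) : 0 ≤ Aconst p :=
  tsum_nonneg fun _ => by positivity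

lemma summable_mul_and_tsum_mul_le_sqrt_mul_sqrt {ι : Type*} {f g : ι → ℝ}
    (hf : ∀ i, 0 ≤ f i) (hg : ∀ i, 0 ≤ g i)
    (hf2 : Summable fun i => f i ^ 2) (hg2 : Summable fun i => g i ^ 2) :
    Summable (fun i => f i * g i) ∧
      ∑' i, f i * g i ≤ √(∑' i, f i ^ 2) * √(∑' i, g i ^ 2) := by
  have hrpow : ∀ x : ℝ, x ^ (2 : ℝ) = x ^ 2 := fun x => rpow_two x
  simp only [← hrpow] at hf2 hg2 ⊢
  refine ⟨summable_mul_of_Lp_Lq_of_nonneg .two_two hf hg hf2 hg2, ?_⟩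
  simpa only [sqrt_eq_rpow, one_div] using
    inner_le_Lp_mul_Lq_tsum_of_nonneg .two_two hf hg hf2 hg2

lemma summable_abs_and_sqrt_two_mul_tsum_abs_le {p : ℕ} (hp : 1 ≤ p) {Q : ℝ} {θ : ℕ → ℝ}
    (hθ : θ ∈ ellipsoid p Q) :
    Summable (fun j => |θ (j + 1)|) ∧ √2 * ∑' j, |θ (j + 1)| ≤ Bconst p Q := by
  obtain ⟨hsum, hlt⟩ := hθ
  set w : ℕ → ℝ := fun j => (vcoef (j + 1) : ℝ) ^ p
  have hw : ∀ j, 0 < w j := fun j =>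
    pow_pos (Nat.cast_pos.2 ((Nat.succ_pos j).trans_le (succ_le_vcoef_succ j))) p
  have hw_sq : ∀ j, w j ^ 2 = (vcoef (j + 1) : ℝ) ^ (2 * p) := fun j => by ring
  have hsplit : ∀ j, |θ (j + 1)| = (w j * |θ (j + 1)|) * (w j)⁻¹ := fun j => by
    field_simp [(hw j).ne']
  have htail : Summable fun j => (w j * |θ (j + 1)|) ^ 2 := by
    simpa only [mul_pow, sq_abs, hw_sq] using (summable_nat_add_iff 1).2 hsum
  have htail_le : ∑' j, (w j * |θ (j + 1)|) ^ 2 ≤ Q := by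
    simp only [mul_pow, sq_abs, hw_sq]
    rw [hsum.tsum_eq_zero_add] at hlt
    linarith [show 0 ≤ (vcoef 0 : ℝ) ^ (2 * p) * θ 0 ^ 2 by positivity]
  have hweights : Summable fun j => (w j)⁻¹ ^ 2 := by
    simpa only [inv_pow, hw_sq] using summable_inv_vcoef_succ_pow hp
  have hA : ∑' j, (w j)⁻¹ ^ 2 = Aconst p := by
    simp only [inv_pow, hw_sq, Aconst]
  obtain ⟨hsum_abs, hCS⟩ := summable_mul_and_tsum_mul_le_sqrt_mul_sqrt
    (fun j => mul_nonneg (hw j).le (abs_nonneg _)) (fun j => (inv_pos.2 (hw j)).le)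
    htail hweights
  rw [funext hsplit]
  refine ⟨hsum_abs, ?_⟩
  calc √2 * ∑' j, w j * |θ (j + 1)| * (w j)⁻¹ ≤ √2 * (√Q * √(Aconst p)) := by
        gcongr
        rw [← hA]
        exact hCS.trans (by gcongr)
    _ = Bconst p Q := by
        rw [Bconst, sqrt_mul' _ (Aconst_nonneg p), sqrt_mul zero_le_two, mul_assoc]

lemma norm_logDen_term_le (θ : ℕ → ℝ) (j : ℕ) (x : ℝ) :
    ‖θ (j + 1) * phiB (j + 1) x‖ ≤ √2 * |θ (j + 1)| := by
  rw [norm_mul, norm_eq_abs, norm_eq_abs, mul_comm]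
  exact mul_le_mul_of_nonneg_right (abs_phiB_le _ _) (abs_nonneg _)

lemma continuous_logDen {θ : ℕ → ℝ} (hθ : Summable fun j => |θ (j + 1)|) :
    Continuous (logDen θ) :=
  continuous_tsum (fun _ => continuous_const.mul (continuous_phiB _)) (hθ.mul_left √2)
    (norm_logDen_term_le θ)

lemma abs_logDen_le {θ : ℕ → ℝ} (hθ : Summable fun j => |θ (j + 1)|) (x : ℝ) :
    |logDen θ x| ≤ √2 * ∑' j, |θ (j + 1)| := by
  rw [← norm_eq_abs, logDen, ← tsum_mul_left]
  exact tsum_of_norm_bounded (hθ.mul_left √2).hasSum fun j => norm_logDen_term_le θ j x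

lemma volume_real_Icc_zero_one : volume.real (Icc (0 : ℝ) 1) = 1 := by
  simp [Measure.real, Real.volume_Icc]

lemma exp_div_setIntegral_exp_mem_Icc {g : ℝ → ℝ} {B : ℝ} (hg : Continuous g)
    (hB : ∀ x, |g x| ≤ B) (x : ℝ) :
    exp (g x) / ∫ t in Icc (0 : ℝ) 1, exp (g t) ∈ Icc (exp (-(2 * B))) (exp (2 * B)) := by
  have hlow : ∀ t, exp (-B) ≤ exp (g t) := fun t => exp_le_exp.2 (neg_le_of_abs_le (hB t))
  have hup : ∀ t, exp (g t) ≤ exp B := fun t => exp_le_exp.2 (le_of_abs_le (hB t))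
  have hint : IntegrableOn (fun t => exp (g t)) (Icc 0 1) :=
    (continuous_exp.comp hg).integrableOn_Icc
  have hD_low : exp (-B) ≤ ∫ t in Icc (0 : ℝ) 1, exp (g t) := by
    simpa [volume_real_Icc_zero_one] using setIntegral_ge_of_const_le_real measurableSet_Icc
      (by simp [Real.volume_Icc]) (fun t _ => hlow t) hint
  have hD_up : ∫ t in Icc (0 : ℝ) 1, exp (g t) ≤ exp B := by
    simpa [volume_real_Icc_zero_one] using
      setIntegral_mono_on hint continuous_const.integrableOn_Icc measurableSet_Icc
        fun t _ => hup t
  have hD_pos := (exp_pos (-B)).trans_le hD_low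
  constructor
  · calc exp (-(2 * B)) = exp (-B) / exp B := by rw [← exp_sub]; ring_nf
      _ ≤ _ := div_le_div₀ (exp_pos _).le (hlow x) hD_pos hD_up
  · calc _ ≤ exp B / exp (-B) := div_le_div₀ (exp_pos _).le (hup x) (exp_pos _) hD_low
      _ = exp (2 * B) := by rw [← exp_sub]; ring_nf

lemma continuous_fdens {p : ℕ} (hp : 1 ≤ p) {Q : ℝ} {θ : ℕ → ℝ} (hθ : θ ∈ ellipsoid p Q) :
    Continuous (fdens θ) :=
  (continuous_exp.comp
    (continuous_logDen (summable_abs_and_sqrt_two_mul_tsum_abs_le hp hθ).1)).div_const _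

lemma fdens_mem_Icc {p : ℕ} (hp : 1 ≤ p) {Q : ℝ} {θ : ℕ → ℝ} (hθ : θ ∈ ellipsoid p Q)
    (x : ℝ) :
    fdens θ x ∈ Icc (exp (-(2 * Bconst p Q))) (exp (2 * Bconst p Q)) := by
  obtain ⟨hsum, hle⟩ := summable_abs_and_sqrt_two_mul_tsum_abs_le hp hθ
  exact exp_div_setIntegral_exp_mem_Icc (continuous_logDen hsum)
    (fun y => (abs_logDen_le hsum y).trans hle) x

lemma sq_sqrt_sub_sqrt_le {m a b : ℝ} (hm : 0 < m) (ha : m ^ 2 ≤ a) (hb : m ^ 2 ≤ b) :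
    (√a - √b) ^ 2 ≤ (2 * m)⁻¹ ^ 2 * (a - b) ^ 2 := by
  have hab : a - b = (√a - √b) * (√a + √b) := by
    linear_combination sq_sqrt ((sq_nonneg m).trans hb) - sq_sqrt ((sq_nonneg m).trans ha)
  have hsum : 2 * m ≤ √a + √b := by
    linarith [le_sqrt_of_sq_le ha, le_sqrt_of_sq_le hb]
  rw [inv_pow, ← div_eq_inv_mul, le_div_iff₀ (by positivity), hab, mul_pow (√a - √b)]
  gcongr

lemma hell_le_inv_two_mul_sqrt_setIntegral_sq {f g : ℝ → ℝ} {m : ℝ} (hm : 0 < m)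
    (hf : ∀ x ∈ Icc (0 : ℝ) 1, m ^ 2 ≤ f x) (hg : ∀ x ∈ Icc (0 : ℝ) 1, m ^ 2 ≤ g x)
    (hint : IntegrableOn (fun x => (f x - g x) ^ 2) (Icc 0 1)) :
    hell f g ≤ (2 * m)⁻¹ * √(∫ x in Icc (0 : ℝ) 1, (f x - g x) ^ 2) := by
  have hmono : ∫ x in Icc (0 : ℝ) 1, (√(f x) - √(g x)) ^ 2 ≤
      (2 * m)⁻¹ ^ 2 * ∫ x in Icc (0 : ℝ) 1, (f x - g x) ^ 2 := by
    rw [← integral_const_mul]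
    exact integral_mono_of_nonneg (.of_forall fun _ => sq_nonneg _) (hint.const_mul _)
      (ae_restrict_of_forall_mem measurableSet_Icc fun x hx =>
        sq_sqrt_sub_sqrt_le hm (hf x hx) (hg x hx))
  calc hell f g ≤ √((2 * m)⁻¹ ^ 2 * ∫ x in Icc (0 : ℝ) 1, (f x - g x) ^ 2) :=
        sqrt_le_sqrt hmono
    _ = _ := by rw [sqrt_mul (by positivity), sqrt_sq (by positivity)]

lemma sqrt_setIntegral_sq_le_iSup_abs {h : ℝ → ℝ} (hh : Continuous h) :
    √(∫ x in Icc (0 : ℝ) 1, h x ^ 2) ≤ ⨆ x : Icc (0 : ℝ) 1, |h x| := by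
  set M := ⨆ x : Icc (0 : ℝ) 1, |h x|
  have hbdd : BddAbove (range fun x : Icc (0 : ℝ) 1 => |h x|) :=
    (isCompact_range (hh.abs.comp continuous_subtype_val)).bddAbove
  have hle : ∀ x ∈ Icc (0 : ℝ) 1, |h x| ≤ M := fun x hx => le_ciSup hbdd ⟨x, hx⟩
  have hM : 0 ≤ M := (abs_nonneg _).trans (hle 0 ⟨le_rfl, zero_le_one⟩)
  have hint : ∫ x in Icc (0 : ℝ) 1, h x ^ 2 ≤ M ^ 2 := by
    simpa [volume_real_Icc_zero_one] using
      setIntegral_mono_on (μ := volume) (hh.pow 2).integrableOn_Icc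
        continuous_const.integrableOn_Icc measurableSet_Icc
        fun x hx => (sq_abs (h x)).symm.le.trans (pow_le_pow_left₀ (abs_nonneg _) (hle x hx) 2)
  exact sqrt_le_iff.2 ⟨hM, hint⟩

theorem statement_14_general (p : ℕ) (hp : 1 ≤ p) (Q : ℝ)
    (θ θ' : ℕ → ℝ) (hθ : θ ∈ ellipsoid p Q) (hθ' : θ' ∈ ellipsoid p Q) :
    hell (fdens θ') (fdens θ) ≤
      Real.exp (Bconst p Q) / 2 *
        Real.sqrt (∫ x in Set.Icc (0 : ℝ) 1, (fdens θ' x - fdens θ x) ^ 2) ∧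
    ∀ ε > (0 : ℝ), ε < hell (fdens θ') (fdens θ) →
      Real.sqrt (∫ x in Set.Icc (0 : ℝ) 1, (fdens θ' x - fdens θ x) ^ 2) ≤
          (⨆ x : Set.Icc (0 : ℝ) 1, |fdens θ' (x : ℝ) - fdens θ (x : ℝ)|) ∧
      2 * Real.exp (-Bconst p Q) * ε <
        Real.sqrt (∫ x in Set.Icc (0 : ℝ) 1, (fdens θ' x - fdens θ x) ^ 2) := by
  set B := Bconst p Q
  have hdiff : Continuous fun x => fdens θ' x - fdens θ x :=
    (continuous_fdens hp hθ').sub (continuous_fdens hp hθ)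
  have hlow : ∀ η ∈ ellipsoid p Q, ∀ x ∈ Icc (0 : ℝ) 1, exp (-B) ^ 2 ≤ fdens η x :=
    fun η hη x _ => by
      rw [← exp_nat_mul]
      simpa [neg_mul, mul_neg] using (fdens_mem_Icc hp hη x).1
  have hhell : hell (fdens θ') (fdens θ) ≤
      exp B / 2 * √(∫ x in Icc (0 : ℝ) 1, (fdens θ' x - fdens θ x) ^ 2) := by
    have h := hell_le_inv_two_mul_sqrt_setIntegral_sq (exp_pos (-B)) (hlow θ' hθ') (hlow θ hθ)
      (hdiff.pow 2).integrableOn_Icc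
    rwa [exp_neg, mul_inv, inv_inv, mul_comm 2⁻¹, ← div_eq_mul_inv] at h
  refine ⟨hhell, fun ε _ hε => ⟨sqrt_setIntegral_sq_le_iSup_abs hdiff, ?_⟩⟩
  calc 2 * exp (-B) * ε < 2 * exp (-B) * hell (fdens θ') (fdens θ) := by gcongr
    _ ≤ 2 * exp (-B) * (exp B / 2 * √(∫ x in Icc (0 : ℝ) 1, (fdens θ' x - fdens θ x) ^ 2)) := by
        gcongr
    _ = √(∫ x in Icc (0 : ℝ) 1, (fdens θ' x - fdens θ x) ^ 2) := by
        rw [exp_neg]; field_simp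

/-- Hellinger distance dominated by the L2 distance between densities. -/
theorem statement_14 (p : ℕ) (hp : 1 ≤ p) (Q : ℝ) (hQ : 0 < Q)
    (θ θ' : ℕ → ℝ) (hθ : θ ∈ ellipsoid p Q) (hθ' : θ' ∈ ellipsoid p Q) :
    hell (fdens θ') (fdens θ) ≤
      Real.exp (Bconst p Q) / 2 *
        Real.sqrt (∫ x in Set.Icc (0 : ℝ) 1, (fdens θ' x - fdens θ x) ^ 2) ∧
    ∀ ε > (0 : ℝ), ε < hell (fdens θ') (fdens θ) →
      Real.sqrt (∫ x in Set.Icc (0 : ℝ) 1, (fdens θ' x - fdens θ x) ^ 2) ≤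
          (⨆ x : Set.Icc (0 : ℝ) 1, |fdens θ' (x : ℝ) - fdens θ (x : ℝ)|) ∧
      2 * Real.exp (-Bconst p Q) * ε <
        Real.sqrt (∫ x in Set.Icc (0 : ℝ) 1, (fdens θ' x - fdens θ x) ^ 2) :=
  statement_14_general p hp Q θ θ' hθ hθ'
end

section
/- Let p ≥ 1 be an integer, Q > 0, and let θ₀ ∈ E_p(Q) with Σ_{j≥0} v_j^{2p} θ_{0,j}² = Q − δ₀ for some 0 < δ₀ ≤ Q. Fix 0 < η₀ ≤ √Q − √(Q − δ₀) and set C₀ = 16^{p+1} Q / η₀² and ε_n = n^{−p/(2p+1)}, N = ⌈(8Q/(B₁² ε_n²))^{1/(2p)}⌉. Then there exists n̄ such that for all n ≥ n̄, every sequence θ satisfying Σ_{j=1}^{N} (θ_j − θ_{0,j})² ≤ B₁² ε_n² / C₀ and Σ_{j=N+1}^∞ v_j^{2p} θ_j² ≤ B₁² ε_n² / 8 also satisfies (i) Σ_{j≥0} v_j^{2p} θ_j² < Q (i.e., θ ∈ E_p(Q)) and (ii) Σ_{j≥1} (θ_j − θ_{0,j})² ≤ B₁² ε_n². -/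
open MeasureTheory Filter ProbabilityTheory

/-!
Write `t = B₁² ε_n²`. Since `t → 0`, eventually `4 ^ p ≤ 8Q/t`, and then the cutoff
`N = ⌈(8Q/t)^{1/(2p)}⌉` gives `v_j^{2p} ≤ (N+1)^{2p} ≤ 4^p · 8Q/t` for `j ≤ N` and
`v_j^{2p} ≥ 8Q/t` for `j > N`.

(i) On `1 ≤ j ≤ N` the weighted distance from `θ` to `θ₀` is at most `4^p · 8Q/C₀ ≤ η₀²/8`, so by
Minkowski the weighted norm of this part of `θ` is at most `√(Q - δ₀) + η₀/2`; the tail adds at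
most `t/8 ≤ η₀²/4`, which keeps the total below `(√(Q - δ₀) + η₀)² ≤ Q`.

(ii) The indices `j ≤ N` contribute at most `t/C₀ ≤ t/2`; beyond `N` the weights are at least
`8Q/t`, which turns the weighted bounds `t/8` on `θ` and `Q` on `θ₀` into the bound `t/2` on
`Σ (θ_j - θ₀_j)²`.
-/

open Finset Topology

lemma vcoef_zero : vcoef 0 = 0 := rfl

lemma vcoef_le_add_one (j : ℕ) : vcoef j ≤ j + 1 := by
  unfold vcoef; split_ifs <;> omega

lemma le_vcoef (j : ℕ) : j ≤ vcoef j := by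
  unfold vcoef; split_ifs <;> omega

lemma summable_add_left_iff {f : ℕ → ℝ} (k : ℕ) :
    (Summable fun i => f (k + i)) ↔ Summable f := by
  simpa only [add_comm k] using summable_nat_add_iff (f := f) k

lemma Summable.tsum_eq_sum_range_add_tsum {f : ℕ → ℝ} (hf : Summable f) (k : ℕ) :
    ∑' i, f i = ∑ i ∈ range k, f i + ∑' i, f (k + i) := by
  simpa only [add_comm k] using (hf.sum_add_tsum_nat_add k).symm

lemma sum_range_comp_succ (f : ℕ → ℝ) (N : ℕ) :
    ∑ i ∈ range N, f (i + 1) = ∑ i ∈ Icc 1 N, f i := by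
  rw [range_eq_Ico, sum_Ico_add', zero_add, Ico_add_one_right_eq_Icc]

lemma sum_add_sq_le_sq_sqrt_add_sqrt {ι : Type*} (s : Finset ι) (f g : ι → ℝ) :
    ∑ i ∈ s, (f i + g i) ^ 2 ≤ (√(∑ i ∈ s, f i ^ 2) + √(∑ i ∈ s, g i ^ 2)) ^ 2 := by
  have hcs := Real.sum_mul_le_sqrt_mul_sqrt s f g
  have hf : 0 ≤ ∑ i ∈ s, f i ^ 2 := sum_nonneg fun _ _ => sq_nonneg _
  have hg : 0 ≤ ∑ i ∈ s, g i ^ 2 := sum_nonneg fun _ _ => sq_nonneg _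
  have hmul : ∑ i ∈ s, 2 * f i * g i = 2 * ∑ i ∈ s, f i * g i := by
    rw [mul_sum]; exact sum_congr rfl fun _ _ => mul_assoc _ _ _
  rw [add_sq, Real.sq_sqrt hf, Real.sq_sqrt hg]
  simp only [add_sq, sum_add_distrib, hmul]
  linarith

lemma summable_and_tsum_le_div_of_le_weight {w a : ℕ → ℝ} {K : ℝ} (hK : 0 < K)
    (hw : ∀ j, K ≤ w j) (ha : ∀ j, 0 ≤ a j) (h : Summable fun j => w j * a j) :
    Summable a ∧ ∑' j, a j ≤ (∑' j, w j * a j) / K := by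
  have hle : ∀ j, a j ≤ w j * a j / K := fun j => by
    rw [le_div_iff₀ hK, mul_comm]; exact mul_le_mul_of_nonneg_right (hw j) (ha j)
  have hsum : Summable a := (h.div_const K).of_nonneg_of_le ha hle
  exact ⟨hsum, tsum_div_const (f := fun j => w j * a j) ▸ hsum.tsum_le_tsum hle (h.div_const K)⟩

lemma le_pow_of_ceil_rpow_inv_le {K : ℝ} (hK : 0 ≤ K) {n m : ℕ} (hn : n ≠ 0)
    (hm : ⌈K ^ (n : ℝ)⁻¹⌉₊ ≤ m) : K ≤ (m : ℝ) ^ n :=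
  calc K = (K ^ (n : ℝ)⁻¹) ^ n := (Real.rpow_inv_natCast_pow hK hn).symm
    _ ≤ (m : ℝ) ^ n := pow_le_pow_left₀ (by positivity)
        ((Nat.le_ceil _).trans (by exact_mod_cast hm)) n

lemma ceil_rpow_inv_add_one_pow_le {K : ℝ} {n : ℕ} (hn : n ≠ 0) (hK : 2 ^ n ≤ K) :
    ((⌈K ^ (n : ℝ)⁻¹⌉₊ : ℝ) + 1) ^ n ≤ 2 ^ n * K := by
  set x := K ^ (n : ℝ)⁻¹
  have hK0 : 0 ≤ K := le_trans (by positivity) hK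
  have hxn : x ^ n = K := Real.rpow_inv_natCast_pow hK0 hn
  have hx : 2 ≤ x := (pow_le_pow_iff_left₀ zero_le_two (by positivity) hn).1 (hxn ▸ hK)
  have hceil := Nat.ceil_lt_add_one (by positivity : 0 ≤ x)
  calc ((⌈x⌉₊ : ℝ) + 1) ^ n ≤ (2 * x) ^ n := pow_le_pow_left₀ (by positivity) (by linarith) n
    _ = 2 ^ n * K := by rw [mul_pow, hxn]

lemma tendsto_B1sq_mul_eps_sq {p : ℕ} (hp : p ≠ 0) (Q : ℝ) :
    Tendsto (fun n : ℕ => B1sq p Q * eps p n ^ 2) atTop (𝓝 0) := by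
  have h : Tendsto (eps p) atTop (𝓝 0) := by
    have := (tendsto_rpow_neg_atTop (y := p / (2 * p + 1)) (by positivity)).comp
      tendsto_natCast_atTop_atTop
    exact this.congr fun n => by simp only [Function.comp_apply, eps, neg_div]
  simpa using (h.pow 2).const_mul (B1sq p Q)

lemma vcoef_pow_le_of_mem_Icc {p N : ℕ} (hp : p ≠ 0) {K : ℝ} (hK : 4 ^ p ≤ K)
    (hN : N = ⌈K ^ ((1 : ℝ) / (2 * p))⌉₊) {j : ℕ} (hj : j ∈ Icc 1 N) :
    (vcoef j : ℝ) ^ (2 * p) ≤ 4 ^ p * K := by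
  have h4 : (4 : ℝ) ^ p = 2 ^ (2 * p) := by rw [pow_mul]; norm_num
  have hroot : (1 : ℝ) / (2 * p) = ((2 * p : ℕ) : ℝ)⁻¹ := by push_cast; rw [one_div]
  have hjN : vcoef j ≤ N + 1 := (vcoef_le_add_one j).trans (by simp only [mem_Icc] at hj; omega)
  rw [hroot] at hN
  calc (vcoef j : ℝ) ^ (2 * p) ≤ ((N : ℝ) + 1) ^ (2 * p) :=
        pow_le_pow_left₀ (by positivity) (by exact_mod_cast hjN) _
    _ ≤ 4 ^ p * K := h4 ▸ hN ▸ ceil_rpow_inv_add_one_pow_le (by omega) (h4 ▸ hK)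

lemma le_vcoef_pow_of_eq_ceil {p N : ℕ} (hp : p ≠ 0) {K : ℝ} (hK : 0 ≤ K)
    (hN : N = ⌈K ^ ((1 : ℝ) / (2 * p))⌉₊) (j : ℕ) :
    K ≤ (vcoef (N + 1 + j) : ℝ) ^ (2 * p) := by
  have hroot : (1 : ℝ) / (2 * p) = ((2 * p : ℕ) : ℝ)⁻¹ := by push_cast; rw [one_div]
  rw [hroot] at hN
  exact le_pow_of_ceil_rpow_inv_le hK (by omega) (hN ▸ by linarith [le_vcoef (N + 1 + j)])

lemma sum_Icc_vcoef_pow_mul_le {p N : ℕ} (hp : p ≠ 0) {K c : ℝ} (hK : 4 ^ p ≤ K)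
    (hN : N = ⌈K ^ ((1 : ℝ) / (2 * p))⌉₊) {a : ℕ → ℝ} (ha : ∀ j, 0 ≤ a j)
    (hsum : ∑ j ∈ Icc 1 N, a j ≤ c) :
    ∑ j ∈ Icc 1 N, (vcoef j : ℝ) ^ (2 * p) * a j ≤ 4 ^ p * K * c :=
  have hK0 : 0 ≤ K := le_trans (by positivity) hK
  calc _ ≤ ∑ j ∈ Icc 1 N, 4 ^ p * K * a j := sum_le_sum fun j hj =>
        mul_le_mul_of_nonneg_right (vcoef_pow_le_of_mem_Icc hp hK hN hj) (ha j)
    _ ≤ 4 ^ p * K * c := by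
        rw [← mul_sum]; exact mul_le_mul_of_nonneg_left hsum (by positivity)

lemma mem_ellipsoid_of_head_tail {p N : ℕ} (hp : p ≠ 0) {Q η₀ : ℝ} (hQ : 0 ≤ Q)
    {θ₀ θ : ℕ → ℝ} (hθ₀sum : Summable fun j => (vcoef j : ℝ) ^ (2 * p) * θ₀ j ^ 2)
    (hη₀ : 0 < η₀) (hη₀le : η₀ ≤ √Q - √(∑' j, (vcoef j : ℝ) ^ (2 * p) * θ₀ j ^ 2))
    (hhead : ∑ j ∈ Icc 1 N, (vcoef j : ℝ) ^ (2 * p) * (θ j - θ₀ j) ^ 2 ≤ η₀ ^ 2 / 8)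
    (htail_sum : Summable fun j => (vcoef (N + 1 + j) : ℝ) ^ (2 * p) * θ (N + 1 + j) ^ 2)
    (htail : ∑' j, (vcoef (N + 1 + j) : ℝ) ^ (2 * p) * θ (N + 1 + j) ^ 2 ≤ η₀ ^ 2 / 4) :
    θ ∈ ellipsoid p Q := by
  have hsum : Summable fun j => (vcoef j : ℝ) ^ (2 * p) * θ j ^ 2 :=
    (summable_add_left_iff (f := fun j => (vcoef j : ℝ) ^ (2 * p) * θ j ^ 2) (N + 1)).1 htail_sum
  refine ⟨hsum, ?_⟩
  have hsplit : ∑' j, (vcoef j : ℝ) ^ (2 * p) * θ j ^ 2 =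
      ∑ j ∈ Icc 1 N, (vcoef j : ℝ) ^ (2 * p) * θ j ^ 2 +
        ∑' j, (vcoef (N + 1 + j) : ℝ) ^ (2 * p) * θ (N + 1 + j) ^ 2 := by
    rw [hsum.tsum_eq_sum_range_add_tsum (N + 1), sum_range_succ',
      sum_range_comp_succ (fun j => (vcoef j : ℝ) ^ (2 * p) * θ j ^ 2)]
    simp [vcoef_zero, hp]
  have hmink := sum_add_sq_le_sq_sqrt_add_sqrt (Icc 1 N)
    (fun j => (vcoef j : ℝ) ^ p * (θ j - θ₀ j)) (fun j => (vcoef j : ℝ) ^ p * θ₀ j)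
  have hsq : ∀ j x, ((vcoef j : ℝ) ^ p * x) ^ 2 = (vcoef j : ℝ) ^ (2 * p) * x ^ 2 :=
    fun j x => by ring
  simp only [← mul_add, sub_add_cancel, hsq] at hmink
  set s := √(∑' j, (vcoef j : ℝ) ^ (2 * p) * θ₀ j ^ 2)
  have hdiff : √(∑ j ∈ Icc 1 N, (vcoef j : ℝ) ^ (2 * p) * (θ j - θ₀ j) ^ 2) ≤ η₀ / 2 :=
    Real.sqrt_le_iff.2 ⟨by positivity, by linarith [sq_nonneg η₀]⟩
  have hθ₀head : √(∑ j ∈ Icc 1 N, (vcoef j : ℝ) ^ (2 * p) * θ₀ j ^ 2) ≤ s :=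
    Real.sqrt_le_sqrt (hθ₀sum.sum_le_tsum _ fun _ _ => by positivity)
  have hhead_le : ∑ j ∈ Icc 1 N, (vcoef j : ℝ) ^ (2 * p) * θ j ^ 2 ≤ (η₀ / 2 + s) ^ 2 :=
    hmink.trans (pow_le_pow_left₀ (by positivity) (add_le_add hdiff hθ₀head) 2)
  have hs : 0 ≤ s := Real.sqrt_nonneg _
  calc _ ≤ (η₀ / 2 + s) ^ 2 + η₀ ^ 2 / 4 := hsplit ▸ add_le_add hhead_le htail
    _ < (s + η₀) ^ 2 := by nlinarith
    _ ≤ √Q ^ 2 := pow_le_pow_left₀ (by positivity) (by linarith) 2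
    _ = Q := Real.sq_sqrt hQ

lemma summable_and_tsum_sq_sub_le {p N : ℕ} {Q t : ℝ} (hQ : 0 < Q) (ht : 0 < t)
    (htQ : t ≤ 8 * Q) {θ₀ θ : ℕ → ℝ}
    (hθ₀sum : Summable fun j => (vcoef j : ℝ) ^ (2 * p) * θ₀ j ^ 2)
    (hθ₀ : ∑' j, (vcoef j : ℝ) ^ (2 * p) * θ₀ j ^ 2 ≤ Q)
    (hweight : ∀ j, 8 * Q / t ≤ (vcoef (N + 1 + j) : ℝ) ^ (2 * p))
    (hhead : ∑ j ∈ Icc 1 N, (θ j - θ₀ j) ^ 2 ≤ t / 2)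
    (htail_sum : Summable fun j => (vcoef (N + 1 + j) : ℝ) ^ (2 * p) * θ (N + 1 + j) ^ 2)
    (htail : ∑' j, (vcoef (N + 1 + j) : ℝ) ^ (2 * p) * θ (N + 1 + j) ^ 2 ≤ t / 8) :
    (Summable fun j => (θ (j + 1) - θ₀ (j + 1)) ^ 2) ∧
      ∑' j, (θ (j + 1) - θ₀ (j + 1)) ^ 2 ≤ t := by
  set w : ℕ → ℝ := fun j => (vcoef (N + 1 + j) : ℝ) ^ (2 * p)
  have hθ₀tail_sum : Summable fun j => w j * θ₀ (N + 1 + j) ^ 2 :=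
    (summable_add_left_iff (f := fun j => (vcoef j : ℝ) ^ (2 * p) * θ₀ j ^ 2) (N + 1)).2 hθ₀sum
  have hθ₀tail : ∑' j, w j * θ₀ (N + 1 + j) ^ 2 ≤ Q :=
    (tsum_comp_le_tsum_of_inj hθ₀sum (fun _ => by positivity)
      (add_right_injective (N + 1))).trans hθ₀
  have hpt : ∀ j, w j * (θ (N + 1 + j) - θ₀ (N + 1 + j)) ^ 2 ≤
      2 * (w j * θ (N + 1 + j) ^ 2) + 2 * (w j * θ₀ (N + 1 + j) ^ 2) := fun j => by
    nlinarith [mul_nonneg (by positivity : 0 ≤ w j) (sq_nonneg (θ (N + 1 + j) + θ₀ (N + 1 + j)))]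
  have hbound_sum := (htail_sum.mul_left 2).add (hθ₀tail_sum.mul_left 2)
  have hdw_sum := hbound_sum.of_nonneg_of_le (fun j => by positivity) hpt
  have hdw : ∑' j, w j * (θ (N + 1 + j) - θ₀ (N + 1 + j)) ^ 2 ≤ t / 2 * (8 * Q / t) :=
    calc _ ≤ 2 * ∑' j, w j * θ (N + 1 + j) ^ 2 + 2 * ∑' j, w j * θ₀ (N + 1 + j) ^ 2 := by
          rw [← tsum_mul_left, ← tsum_mul_left, ← (htail_sum.mul_left 2).tsum_add
            (hθ₀tail_sum.mul_left 2)]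
          exact hdw_sum.tsum_le_tsum hpt hbound_sum
      _ ≤ 4 * Q := by linarith
      _ = t / 2 * (8 * Q / t) := by field_simp; ring
  obtain ⟨hd_sum, hd⟩ := summable_and_tsum_le_div_of_le_weight (by positivity) hweight
    (fun _ => sq_nonneg _) hdw_sum
  have hdtail := hd.trans ((div_le_iff₀ (by positivity)).2 hdw)
  have hshift : ∀ j, N + 1 + j = N + j + 1 := fun j => by omega
  simp only [hshift] at hd_sum hdtail
  have hsum := (summable_add_left_iff (f := fun j => (θ (j + 1) - θ₀ (j + 1)) ^ 2) N).1 hd_sum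
  refine ⟨hsum, ?_⟩
  rw [hsum.tsum_eq_sum_range_add_tsum N, sum_range_comp_succ (fun j => (θ j - θ₀ j) ^ 2)]
  linarith

lemma two_le_sixteen_pow_mul_div_sq (p : ℕ) {Q η : ℝ} (hη : 0 < η) (hηQ : η ^ 2 ≤ Q) :
    2 ≤ 16 ^ (p + 1) * Q / η ^ 2 := by
  rw [le_div_iff₀ (by positivity)]
  nlinarith [le_self_pow₀ (by norm_num : (1 : ℝ) ≤ 16) (by omega : p + 1 ≠ 0)]

lemma four_pow_mul_div_le_sq_div_eight {p : ℕ} (hp : p ≠ 0) {Q η : ℝ} (hQ : 0 < Q)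
    (hη : 0 < η) : 4 ^ p * (8 * Q) / (16 ^ (p + 1) * Q / η ^ 2) ≤ η ^ 2 / 8 := by
  have h4 : (4 : ℝ) ≤ 4 ^ p := le_self_pow₀ (by norm_num) hp
  have h16 : (16 : ℝ) ^ (p + 1) = 16 * 4 ^ p * 4 ^ p := by
    rw [pow_succ, show (16 : ℝ) = 4 ^ 2 by norm_num, ← pow_mul, pow_mul']; ring
  rw [h16, div_div_eq_mul_div, div_le_div_iff₀ (by positivity) (by norm_num)]
  nlinarith [mul_le_mul_of_nonneg_left h4 (by positivity : (0 : ℝ) ≤ 16 * 4 ^ p * Q * η ^ 2)]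

open MeasureTheory

theorem statement_16_general (p : ℕ) (hp : 1 ≤ p) (Q : ℝ) (hQ : 0 < Q)
    (θ₀ : ℕ → ℝ) (δ₀ : ℝ) (hδ₀ : 0 < δ₀)
    (hθ₀sum : Summable fun j => (vcoef j : ℝ) ^ (2 * p) * θ₀ j ^ 2)
    (hθ₀ : ∑' j : ℕ, (vcoef j : ℝ) ^ (2 * p) * θ₀ j ^ 2 = Q - δ₀)
    (η₀ : ℝ) (hη₀ : 0 < η₀) (hη₀le : η₀ ≤ Real.sqrt Q - Real.sqrt (Q - δ₀))
    (C₀ : ℝ) (hC₀ : C₀ = 16 ^ (p + 1) * Q / η₀ ^ 2) :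
    ∃ nbar : ℕ, ∀ n ≥ nbar, ∀ N : ℕ,
      N = ⌈(8 * Q / (B1sq p Q * eps p n ^ 2)) ^ ((1 : ℝ) / (2 * p))⌉₊ →
      ∀ θ : ℕ → ℝ,
        (∑ j ∈ Finset.Icc 1 N, (θ j - θ₀ j) ^ 2 ≤ B1sq p Q * eps p n ^ 2 / C₀) →
        (Summable fun j : ℕ => (vcoef (N + 1 + j) : ℝ) ^ (2 * p) * θ (N + 1 + j) ^ 2) →
        (∑' j : ℕ, (vcoef (N + 1 + j) : ℝ) ^ (2 * p) * θ (N + 1 + j) ^ 2 ≤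
            B1sq p Q * eps p n ^ 2 / 8) →
        θ ∈ ellipsoid p Q ∧
        (Summable fun j : ℕ => (θ (j + 1) - θ₀ (j + 1)) ^ 2) ∧
        ∑' j : ℕ, (θ (j + 1) - θ₀ (j + 1)) ^ 2 ≤ B1sq p Q * eps p n ^ 2 := by
  have hp0 : p ≠ 0 := by omega
  have hθ₀Q : ∑' j : ℕ, (vcoef j : ℝ) ^ (2 * p) * θ₀ j ^ 2 ≤ Q := by linarith
  rw [← hθ₀] at hη₀le
  have hη₀Q : η₀ ^ 2 ≤ Q :=
    (Real.le_sqrt hη₀.le hQ.le).1 (hη₀le.trans (sub_le_self _ (Real.sqrt_nonneg _)))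
  subst hC₀
  obtain ⟨nbar, hnbar⟩ := eventually_atTop.1 <| (tendsto_B1sq_mul_eps_sq hp0 Q).eventually <|
    eventually_le_nhds (show 0 < min (8 * Q / 4 ^ p) (2 * η₀ ^ 2) by positivity)
  refine ⟨max nbar 1, fun n hn N hN θ hhead htail_sum htail => ?_⟩
  set t := B1sq p Q * eps p n ^ 2
  have ht : 0 < t := mul_pos (Real.exp_pos _)
    (pow_pos (Real.rpow_pos_of_pos (by exact_mod_cast (by omega : 0 < n)) _) 2)
  obtain ⟨htK, htη₀⟩ := le_min_iff.1 (hnbar n (le_of_max_le_left hn))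
  have hK : 4 ^ p ≤ 8 * Q / t := by rwa [le_div_iff₀ ht, ← le_div_iff₀' (by positivity)]
  have hhead_weighted := sum_Icc_vcoef_pow_mul_le hp0 hK hN (fun _ => sq_nonneg _) hhead
  rw [show 4 ^ p * (8 * Q / t) * (t / (16 ^ (p + 1) * Q / η₀ ^ 2)) =
    4 ^ p * (8 * Q) / (16 ^ (p + 1) * Q / η₀ ^ 2) by field_simp] at hhead_weighted
  refine ⟨mem_ellipsoid_of_head_tail hp0 hQ.le hθ₀sum hη₀ hη₀le
    (hhead_weighted.trans (four_pow_mul_div_le_sq_div_eight hp0 hQ hη₀)) htail_sum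
    (htail.trans (by linarith)), ?_⟩
  refine summable_and_tsum_sq_sub_le hQ ht
    (htK.trans (div_le_self (by positivity) (one_le_pow₀ (by norm_num)))) hθ₀sum hθ₀Q
    (le_vcoef_pow_of_eq_ceil hp0 (by positivity) hN)
    (hhead.trans (div_le_div_of_nonneg_left ht.le two_pos ?_)) htail_sum htail
  exact two_le_sixteen_pow_mul_div_sq p hη₀ hη₀Q

/-- Claims (i) and (ii) in the proof of Theorem 2: for large n, members of the set E_n
lie in E_p(Q) and are ℓ²-close to θ₀. -/
theorem statement_16 (p : ℕ) (hp : 1 ≤ p) (Q : ℝ) (hQ : 0 < Q)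
    (θ₀ : ℕ → ℝ) (δ₀ : ℝ) (hδ₀ : 0 < δ₀) (hδ₀Q : δ₀ ≤ Q)
    (hθ₀sum : Summable fun j => (vcoef j : ℝ) ^ (2 * p) * θ₀ j ^ 2)
    (hθ₀ : ∑' j : ℕ, (vcoef j : ℝ) ^ (2 * p) * θ₀ j ^ 2 = Q - δ₀)
    (η₀ : ℝ) (hη₀ : 0 < η₀) (hη₀le : η₀ ≤ Real.sqrt Q - Real.sqrt (Q - δ₀))
    (C₀ : ℝ) (hC₀ : C₀ = 16 ^ (p + 1) * Q / η₀ ^ 2) :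
    ∃ nbar : ℕ, ∀ n ≥ nbar, ∀ N : ℕ,
      N = ⌈(8 * Q / (B1sq p Q * eps p n ^ 2)) ^ ((1 : ℝ) / (2 * p))⌉₊ →
      ∀ θ : ℕ → ℝ,
        (∑ j ∈ Finset.Icc 1 N, (θ j - θ₀ j) ^ 2 ≤ B1sq p Q * eps p n ^ 2 / C₀) →
        (Summable fun j : ℕ => (vcoef (N + 1 + j) : ℝ) ^ (2 * p) * θ (N + 1 + j) ^ 2) →
        (∑' j : ℕ, (vcoef (N + 1 + j) : ℝ) ^ (2 * p) * θ (N + 1 + j) ^ 2 ≤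
            B1sq p Q * eps p n ^ 2 / 8) →
        θ ∈ ellipsoid p Q ∧
        (Summable fun j : ℕ => (θ (j + 1) - θ₀ (j + 1)) ^ 2) ∧
        ∑' j : ℕ, (θ (j + 1) - θ₀ (j + 1)) ^ 2 ≤ B1sq p Q * eps p n ^ 2 :=
  statement_16_general p hp Q hQ θ₀ δ₀ hδ₀ hθ₀sum hθ₀ η₀ hη₀ hη₀le C₀ hC₀
end

section
/- Let p ≥ 1 be an integer, Q > 0, and let θ₀ ∈ E_p(Q) with Σ_{j≥0} v_j^{2p} θ_{0,j}² = Q − δ₀ for some 0 < δ₀ ≤ Q. Let ε_n = n^{−p/(2p+1)}, N = ⌈(2Q/(B₁² ε_n²))^{1/(2p)}⌉, and let B̄₁ > 0 satisfy B̄₁² < B₁² (1 − √(1 − δ₀/Q))² / 2^{4p+1}. Then for all sufficiently large n, every finitely supported sequence θ_N = (0, θ₁, …, θ_N, 0, 0, …) with Σ_{j=1}^N (θ_j − θ_{0,j})² ≤ B̄₁² ε_n² satisfies Σ_{j=0}^N v_j^{2p} θ_j² < Q (i.e., θ_N ∈ E_{p,N}(Q)) and Σ_{j=1}^N (θ_j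 − θ_{0,j})² ≤ B₁² ε_n² / 2. -/
/-! Put `r = √(1 - δ₀/Q)`, so that `θ₀` lies in the weighted `ℓ²` ball of radius `√Q · r`.
For `1 ≤ j ≤ N` the weights satisfy `v_j ≤ 2N`, and once `ε_n` is small the ceiling gives
`N^{2p} ≤ 2^{2p} · 2Q / (B₁² ε_n²)`. Hence a perturbation of `ℓ²` size `B̄₁ ε_n` has weighted size
below `√Q (1 - r)`, which is exactly what the bound on `B̄₁` buys, and Minkowski's inequality keeps
the perturbed sequence inside the ball of radius `√Q`. -/

open MeasureTheory Filter ProbabilityTheory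

open MeasureTheory

open Topology

lemma vcoef_le_two_mul (j : ℕ) : vcoef j ≤ 2 * j := by
  unfold vcoef; split_ifs <;> omega

lemma sqrt_sum_add_sq_le {ι : Type*} (s : Finset ι) (f g : ι → ℝ) :
    √(∑ i ∈ s, (f i + g i) ^ 2) ≤ √(∑ i ∈ s, f i ^ 2) + √(∑ i ∈ s, g i ^ 2) := by
  have hF : 0 ≤ ∑ i ∈ s, f i ^ 2 := by positivity
  have hG : 0 ≤ ∑ i ∈ s, g i ^ 2 := by positivity
  have hexpand : ∑ i ∈ s, (f i + g i) ^ 2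
      = ∑ i ∈ s, f i ^ 2 + 2 * ∑ i ∈ s, f i * g i + ∑ i ∈ s, g i ^ 2 := by
    simp only [add_sq, Finset.sum_add_distrib, Finset.mul_sum, mul_assoc]
  refine Real.sqrt_le_iff.mpr ⟨by positivity, ?_⟩
  rw [hexpand, add_sq, Real.sq_sqrt hF, Real.sq_sqrt hG]
  nlinarith [Real.sum_mul_le_sqrt_mul_sqrt s f g]

lemma sum_sq_lt_of_sum_sq_sub_lt {ι : Type*} (s : Finset ι) {f g : ι → ℝ} {Q δ : ℝ}
    (hQ : 0 < Q) (hδ : 0 ≤ δ) (hf : ∑ i ∈ s, f i ^ 2 ≤ Q - δ)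
    (hgf : ∑ i ∈ s, (g i - f i) ^ 2 < Q * (1 - √(1 - δ / Q)) ^ 2) :
    ∑ i ∈ s, g i ^ 2 < Q := by
  set r := √(1 - δ / Q)
  have hr : r ≤ 1 := Real.sqrt_le_one.mpr (by linarith [div_nonneg hδ hQ.le])
  have hsqrt_f : √(∑ i ∈ s, f i ^ 2) ≤ √Q * r := by
    rw [← Real.sqrt_mul hQ.le, mul_sub, mul_one, mul_div_cancel₀ _ hQ.ne']
    exact Real.sqrt_le_sqrt hf
  have hsqrt_gf : √(∑ i ∈ s, (g i - f i) ^ 2) < √Q * (1 - r) := by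
    rw [← Real.sqrt_sq (sub_nonneg.mpr hr), ← Real.sqrt_mul hQ.le]
    exact Real.sqrt_lt_sqrt (by positivity) hgf
  have hsqrt_g : √(∑ i ∈ s, g i ^ 2) < √Q := by
    calc √(∑ i ∈ s, g i ^ 2) = √(∑ i ∈ s, (f i + (g i - f i)) ^ 2) := by simp
      _ ≤ √(∑ i ∈ s, f i ^ 2) + √(∑ i ∈ s, (g i - f i) ^ 2) := sqrt_sum_add_sq_le s _ _
      _ < √Q * r + √Q * (1 - r) := by linarith
      _ = √Q := by ring
  exact (Real.sqrt_lt_sqrt_iff_of_pos hQ).mp hsqrt_g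

lemma sum_vcoef_pow_mul_sq_le (p N : ℕ) (g : ℕ → ℝ) :
    ∑ j ∈ Finset.Icc 1 N, ((vcoef j : ℝ) ^ p * g j) ^ 2
      ≤ (2 * N : ℝ) ^ (2 * p) * ∑ j ∈ Finset.Icc 1 N, g j ^ 2 := by
  rw [Finset.mul_sum]
  refine Finset.sum_le_sum fun j hj => ?_
  have hv : (vcoef j : ℝ) ≤ 2 * N := by
    have := vcoef_le_two_mul j
    have := (Finset.mem_Icc.mp hj).2
    exact_mod_cast (by omega : vcoef j ≤ 2 * N)
  rw [mul_pow, ← pow_mul, mul_comm p]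
  gcongr

lemma natCeil_rpow_one_div_pow_le {x : ℝ} (hx : 1 ≤ x) {k : ℕ} (hk : k ≠ 0) :
    (⌈x ^ ((1 : ℝ) / k)⌉₊ : ℝ) ^ k ≤ 2 ^ k * x := by
  set c := x ^ ((1 : ℝ) / k)
  have hc : 1 ≤ c := Real.one_le_rpow hx (by positivity)
  have hceil : (⌈c⌉₊ : ℝ) ≤ 2 * c := (Nat.ceil_lt_two_mul (by linarith)).le
  calc (⌈c⌉₊ : ℝ) ^ k ≤ (2 * c) ^ k := by gcongr
    _ = 2 ^ k * x := by
      rw [mul_pow, ← Real.rpow_natCast c, ← Real.rpow_mul (by linarith),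
        one_div_mul_cancel (by exact_mod_cast hk), Real.rpow_one]

lemma eps_pos (p : ℕ) {n : ℕ} (hn : 0 < n) : 0 < eps p n :=
  Real.rpow_pos_of_pos (by exact_mod_cast hn) _

lemma tendsto_eps_atTop {p : ℕ} (hp : 0 < p) : Tendsto (eps p) atTop (𝓝 0) := by
  have hexp : (0 : ℝ) < p / (2 * p + 1) := by positivity
  show Tendsto (fun n : ℕ => eps p n) atTop (𝓝 0)
  simpa [eps, Function.comp_def, neg_div] using
    (tendsto_rpow_neg_atTop hexp).comp tendsto_natCast_atTop_atTop

lemma sum_range_vcoef_pow_mul_sq (p N : ℕ) {θ : ℕ → ℝ} (hθ : θ 0 = 0) :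
    ∑ j ∈ Finset.range (N + 1), (vcoef j : ℝ) ^ (2 * p) * θ j ^ 2
      = ∑ j ∈ Finset.Icc 1 N, ((vcoef j : ℝ) ^ p * θ j) ^ 2 := by
  rw [Finset.range_eq_Ico, Finset.sum_eq_sum_Ico_succ_bot (by omega),
    Finset.Ico_add_one_right_eq_Icc]
  simp [hθ, mul_pow, ← pow_mul, mul_comm p]

lemma sum_vcoef_pow_mul_sq_lt_of_sum_sq_le {p N : ℕ} (hp : p ≠ 0) {Q b ε c ρ : ℝ}
    (hb : 0 < b) (hε : 0 < ε) (hsmall : b * ε ^ 2 ≤ 2 * Q)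
    (hN : N = ⌈(2 * Q / (b * ε ^ 2)) ^ ((1 : ℝ) / (2 * p))⌉₊) {g : ℕ → ℝ}
    (hg : ∑ j ∈ Finset.Icc 1 N, g j ^ 2 ≤ c * ε ^ 2) (hc : c < b * ρ / 2 ^ (4 * p + 1)) :
    ∑ j ∈ Finset.Icc 1 N, ((vcoef j : ℝ) ^ p * g j) ^ 2 < Q * ρ := by
  set x := 2 * Q / (b * ε ^ 2)
  have hx : 1 ≤ x := (one_le_div (by positivity)).mpr hsmall
  have hxε : x * (b * ε ^ 2) = 2 * Q := div_mul_cancel₀ _ (by positivity)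
  have hNpow : (N : ℝ) ^ (2 * p) ≤ 2 ^ (2 * p) * x := by
    have := natCeil_rpow_one_div_pow_le hx (k := 2 * p) (by omega)
    rwa [hN, ← Nat.cast_ofNat, ← Nat.cast_mul]
  have hQ : 0 < Q := by nlinarith [mul_pos hb (pow_pos hε 2)]
  calc _ ≤ (2 * N : ℝ) ^ (2 * p) * (c * ε ^ 2) :=
        (sum_vcoef_pow_mul_sq_le p N g).trans (by gcongr)
    _ ≤ 2 ^ (2 * p) * (2 ^ (2 * p) * x) * (c * ε ^ 2) := by
        have : 0 ≤ c * ε ^ 2 := (Finset.sum_nonneg fun _ _ => sq_nonneg _).trans hg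
        rw [mul_pow]; gcongr
    _ = 2 ^ (4 * p + 1) * c * Q / b := by
        rw [eq_div_iff hb.ne']
        linear_combination 2 ^ (4 * p) * c * hxε
    _ < Q * ρ := by
        rw [lt_div_iff₀ (by positivity)] at hc
        rw [div_lt_iff₀ hb]
        nlinarith

theorem statement_17_general (p : ℕ) (hp : 1 ≤ p) (Q : ℝ) (hQ : 0 < Q)
    (θ₀ : ℕ → ℝ) (δ₀ : ℝ) (hδ₀ : 0 < δ₀)
    (hθ₀sum : Summable fun j => (vcoef j : ℝ) ^ (2 * p) * θ₀ j ^ 2)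
    (hθ₀ : ∑' j : ℕ, (vcoef j : ℝ) ^ (2 * p) * θ₀ j ^ 2 = Q - δ₀)
    (Bbar : ℝ)
    (hBbarlt : Bbar ^ 2 < B1sq p Q * (1 - Real.sqrt (1 - δ₀ / Q)) ^ 2 / 2 ^ (4 * p + 1)) :
    ∃ n₀ : ℕ, ∀ n ≥ n₀, ∀ N : ℕ,
      N = ⌈(2 * Q / (B1sq p Q * eps p n ^ 2)) ^ ((1 : ℝ) / (2 * p))⌉₊ →
      ∀ θ : ℕ → ℝ, θ 0 = 0 → (∀ j, N < j → θ j = 0) →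
        ∑ j ∈ Finset.Icc 1 N, (θ j - θ₀ j) ^ 2 ≤ Bbar ^ 2 * eps p n ^ 2 →
        (∑ j ∈ Finset.range (N + 1), (vcoef j : ℝ) ^ (2 * p) * θ j ^ 2 < Q ∧
          ∑ j ∈ Finset.Icc 1 N, (θ j - θ₀ j) ^ 2 ≤ B1sq p Q * eps p n ^ 2 / 2) := by
  set B₁sq := B1sq p Q
  have hB : 0 < B₁sq := Real.exp_pos _
  have hεsmall : ∀ᶠ n : ℕ in atTop, B₁sq * eps p n ^ 2 ≤ 2 * Q ∧ 0 < eps p n := by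
    have hlim : Tendsto (fun n => B₁sq * eps p n ^ 2) atTop (𝓝 0) := by
      simpa using ((tendsto_eps_atTop hp).pow 2).const_mul B₁sq
    exact (hlim.eventually_le_const (by positivity)).and
      ((eventually_gt_atTop 0).mono fun n hn => eps_pos p hn)
  obtain ⟨n₀, hn₀⟩ := eventually_atTop.mp hεsmall
  refine ⟨n₀, fun n hn N hN θ hθ0 _ hclose => ⟨?_, ?_⟩⟩
  · obtain ⟨hsmall, hε⟩ := hn₀ n hn
    have hθ₀N : ∑ j ∈ Finset.Icc 1 N, ((vcoef j : ℝ) ^ p * θ₀ j) ^ 2 ≤ Q - δ₀ := by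
      simp_rw [mul_pow, ← pow_mul, mul_comm p, ← hθ₀]
      exact hθ₀sum.sum_le_tsum _ fun j _ => by positivity
    have hdist := sum_vcoef_pow_mul_sq_lt_of_sum_sq_le (by omega) hB hε hsmall hN hclose hBbarlt
    rw [sum_range_vcoef_pow_mul_sq p N hθ0]
    refine sum_sq_lt_of_sum_sq_sub_lt _ hQ hδ₀.le hθ₀N ?_
    simpa only [mul_sub] using hdist
  · have hr : (1 - √(1 - δ₀ / Q)) ^ 2 ≤ 1 := by
      have := Real.sqrt_le_one.mpr (by linarith [div_pos hδ₀ hQ] : 1 - δ₀ / Q ≤ 1)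
      nlinarith [Real.sqrt_nonneg (1 - δ₀ / Q)]
    have hBbar : Bbar ^ 2 ≤ B₁sq / 2 :=
      calc Bbar ^ 2 ≤ B₁sq * (1 - √(1 - δ₀ / Q)) ^ 2 / 2 ^ (4 * p + 1) := hBbarlt.le
        _ ≤ B₁sq * 1 / 2 ^ 1 := by gcongr <;> norm_num
        _ = B₁sq / 2 := by ring
    calc _ ≤ Bbar ^ 2 * eps p n ^ 2 := hclose
      _ ≤ B₁sq / 2 * eps p n ^ 2 := by gcongr
      _ = B₁sq * eps p n ^ 2 / 2 := by ring

/-- Claim (b) in the proof of Theorem 3: for large n, finitely supported sequences close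
to θ₀ lie in E_{p,N}(Q) and are within B₁ε_n/√2 of θ₀. -/
theorem statement_17 (p : ℕ) (hp : 1 ≤ p) (Q : ℝ) (hQ : 0 < Q)
    (θ₀ : ℕ → ℝ) (δ₀ : ℝ) (hδ₀ : 0 < δ₀) (hδ₀Q : δ₀ ≤ Q)
    (hθ₀sum : Summable fun j => (vcoef j : ℝ) ^ (2 * p) * θ₀ j ^ 2)
    (hθ₀ : ∑' j : ℕ, (vcoef j : ℝ) ^ (2 * p) * θ₀ j ^ 2 = Q - δ₀)
    (Bbar : ℝ) (hBbar : 0 < Bbar)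
    (hBbarlt : Bbar ^ 2 < B1sq p Q * (1 - Real.sqrt (1 - δ₀ / Q)) ^ 2 / 2 ^ (4 * p + 1)) :
    ∃ n₀ : ℕ, ∀ n ≥ n₀, ∀ N : ℕ,
      N = ⌈(2 * Q / (B1sq p Q * eps p n ^ 2)) ^ ((1 : ℝ) / (2 * p))⌉₊ →
      ∀ θ : ℕ → ℝ, θ 0 = 0 → (∀ j, N < j → θ j = 0) →
        ∑ j ∈ Finset.Icc 1 N, (θ j - θ₀ j) ^ 2 ≤ Bbar ^ 2 * eps p n ^ 2 →
        (∑ j ∈ Finset.range (N + 1), (vcoef j : ℝ) ^ (2 * p) * θ j ^ 2 < Q ∧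
          ∑ j ∈ Finset.Icc 1 N, (θ j - θ₀ j) ^ 2 ≤ B1sq p Q * eps p n ^ 2 / 2) :=
  statement_17_general p hp Q hQ θ₀ δ₀ hδ₀ hθ₀sum hθ₀ Bbar hBbarlt
end

section
/- Let p ≥ 1 and n ≥ 1 be integers and set N₀ = ⌈n^{1/(2p+1)}⌉. Then Σ_{j=1}^{N₀} v_j^{2p} / (n + v_j^{2p+1}) < 2^{2p+1}. -/
open MeasureTheory Filter ProbabilityTheory

/-!
With `m = n^{1/(2p+1)}`, every term `v^{2p} / (m^{2p+1} + v^{2p+1})` is at most `1/m`: the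
denominator dominates `m · v^{2p}` through its first summand when `v ≤ m` and through its second
when `m ≤ v`. Hence the sum is at most `N₀ / m = ⌈m⌉ / m < 2 ≤ 2^{2p+1}`, as `m ≥ 1`.
-/

lemma pow_div_pow_succ_add_pow_succ_le_inv {K : Type*} [Field K] [LinearOrder K]
    [IsStrictOrderedRing K] {m v : K} (hm : 0 < m) (hv : 0 ≤ v) (k : ℕ) :
    v ^ k / (m ^ (k + 1) + v ^ (k + 1)) ≤ m⁻¹ := by
  rw [div_le_iff₀ (by positivity), inv_mul_eq_div, le_div_iff₀ hm]
  rcases le_total v m with hvm | hmv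
  · calc v ^ k * m ≤ m ^ k * m := by gcongr
      _ = m ^ (k + 1) := (pow_succ m k).symm
      _ ≤ m ^ (k + 1) + v ^ (k + 1) := le_add_of_nonneg_right (by positivity)
  · calc v ^ k * m ≤ v ^ k * v := by gcongr
      _ = v ^ (k + 1) := (pow_succ v k).symm
      _ ≤ m ^ (k + 1) + v ^ (k + 1) := le_add_of_nonneg_left (by positivity)

theorem statement_19_general (p : ℕ) (n : ℕ) (hn : 1 ≤ n)
    (N₀ : ℕ) (hN₀ : N₀ = ⌈(n : ℝ) ^ ((1 : ℝ) / (2 * (p : ℝ) + 1))⌉₊) :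
    ∑ j ∈ Finset.Icc 1 N₀,
        (vcoef j : ℝ) ^ (2 * p) / ((n : ℝ) + (vcoef j : ℝ) ^ (2 * p + 1)) <
      2 ^ (2 * p + 1) := by
  set m : ℝ := (n : ℝ) ^ ((1 : ℝ) / (2 * (p : ℝ) + 1))
  have hm : 1 ≤ m := Real.one_le_rpow (by exact_mod_cast hn) (by positivity)
  have hm_pow : m ^ (2 * p + 1) = n := by
    have := Real.rpow_inv_natCast_pow (n.cast_nonneg (α := ℝ)) (2 * p).succ_ne_zero
    push_cast at this
    rwa [← one_div] at this
  have hterm (j : ℕ) :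
      (vcoef j : ℝ) ^ (2 * p) / ((n : ℝ) + (vcoef j : ℝ) ^ (2 * p + 1)) ≤ m⁻¹ := by
    rw [← hm_pow]
    exact pow_div_pow_succ_add_pow_succ_le_inv (by positivity) (by positivity) _
  calc _ ≤ (Finset.Icc 1 N₀).card • m⁻¹ := Finset.sum_le_card_nsmul _ _ _ fun j _ => hterm j
    _ = ⌈m⌉₊ / m := by rw [Nat.card_Icc, add_tsub_cancel_right, nsmul_eq_mul, hN₀, div_eq_mul_inv]
    _ < 2 := by
      rw [div_lt_iff₀ (by positivity)]
      exact Nat.ceil_lt_two_mul (by linarith)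
    _ ≤ 2 ^ (2 * p + 1) := le_self_pow₀ one_le_two (by omega)

/-- The bound `Σ_{j=1}^{N₀} v_j^{2p} / (n + v_j^{2p+1}) < 2^{2p+1}`. -/
theorem statement_19 (p : ℕ) (hp : 1 ≤ p) (n : ℕ) (hn : 1 ≤ n)
    (N₀ : ℕ) (hN₀ : N₀ = ⌈(n : ℝ) ^ ((1 : ℝ) / (2 * (p : ℝ) + 1))⌉₊) :
    ∑ j ∈ Finset.Icc 1 N₀,
        (vcoef j : ℝ) ^ (2 * p) / ((n : ℝ) + (vcoef j : ℝ) ^ (2 * p + 1)) <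
      2 ^ (2 * p + 1) :=
  statement_19_general p n hn N₀ hN₀
end
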